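/- arXiv:2509.20722 — 6 statements merged into one kernel-verified Lean document; each statement's English description precedes it below -/
import Mathlib

section
/- If k_a > 1, then the H-infinity norm of H(jω) = (k_a (jω)² + k_v (jω) + k_p)/((jω)² e^{jτω} + γ(jω) + k_p) exceeds 1; specifically, the limit as ω → ∞ of |H(jω)|² is at least k_a² > 1. -/
open Real Filter

private lemma aux_div_pow (c : ℝ) (n : ℕ) (hn : 0 < n) :
    Tendsto (fun ω : ℝ => c / ω ^ n) atTop (nhds 0) :=
  Tendsto.div_atTop tendsto_const_nhds (tendsto_pow_atTop hn.ne')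

private lemma aux_trig (c τ : ℝ) (f : ℝ → ℝ) (hf : ∀ x, |f x| ≤ 1) (n : ℕ) (hn : 0 < n) :
    Tendsto (fun ω : ℝ => c * f (τ * ω) / ω ^ n) atTop (nhds 0) := by
  refine squeeze_zero_norm' ?_ (aux_div_pow |c| n hn)
  filter_upwards [eventually_ge_atTop (1 : ℝ)] with ω hω
  have hω1 : (0:ℝ) < ω := by linarith
  have hω0 : (0:ℝ) < ω ^ n := pow_pos hω1 n
  rw [Real.norm_eq_abs, abs_div, abs_pow, abs_of_pos hω1]
  refine div_le_div_of_nonneg_right ?_ hω0.le |>.trans_eq rfl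
  calc |c * f (τ * ω)| = |c| * |f (τ * ω)| := abs_mul _ _
    _ ≤ |c| * 1 := mul_le_mul_of_nonneg_left (hf _) (abs_nonneg c)
    _ = |c| := mul_one _

/-- If `k_a > 1`, the limit as `ω → ∞` of `|H(jω)|²` is (at least) `k_a² > 1`. -/
theorem stmt_0 (ka kv kp τ hw γ : ℝ)
    (hka : 0 < ka) (hkv : 0 < kv) (hkp : 0 < kp) (hτ : 0 < τ) (hhw : 0 < hw)
    (hγ : γ = kv + hw * kp)
    (h1 : 1 < ka) :
    Tendsto (fun ω : ℝ =>
        (ka ^ 2 * ω ^ 4 + (kv ^ 2 - 2 * ka * kp) * ω ^ 2 + kp ^ 2) /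
          (ω ^ 4 + γ ^ 2 * ω ^ 2 - 2 * γ * ω ^ 3 * Real.sin (τ * ω) + kp ^ 2
            - 2 * kp * ω ^ 2 * Real.cos (τ * ω)))
      atTop (nhds (ka ^ 2)) ∧ 1 < ka ^ 2 := by
  refine ⟨?_, by nlinarith⟩
  have hg : Tendsto (fun ω : ℝ =>
      ka ^ 2 + (kv ^ 2 - 2 * ka * kp) / ω ^ 2 + kp ^ 2 / ω ^ 4) atTop (nhds (ka ^ 2)) := by
    have := (tendsto_const_nhds (x := ka ^ 2) (f := atTop (α := ℝ))).add
      (aux_div_pow (kv ^ 2 - 2 * ka * kp) 2 (by norm_num)) |>.add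
      (aux_div_pow (kp ^ 2) 4 (by norm_num))
    simpa using this
  have hh : Tendsto (fun ω : ℝ =>
      1 + γ ^ 2 / ω ^ 2 - 2 * γ * Real.sin (τ * ω) / ω + kp ^ 2 / ω ^ 4
        - 2 * kp * Real.cos (τ * ω) / ω ^ 2) atTop (nhds 1) := by
    have hs := aux_trig (2 * γ) τ Real.sin (fun x => abs_sin_le_one x) 1 (by norm_num)
    have hc := aux_trig (2 * kp) τ Real.cos (fun x => abs_cos_le_one x) 2 (by norm_num)
    have := ((((tendsto_const_nhds (x := (1:ℝ)) (f := atTop (α := ℝ))).add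
      (aux_div_pow (γ ^ 2) 2 (by norm_num))).sub (by simpa using hs)).add
      (aux_div_pow (kp ^ 2) 4 (by norm_num))).sub hc
    simpa using this
  have hdiv := hg.div hh one_ne_zero
  rw [div_one] at hdiv
  apply hdiv.congr'
  filter_upwards [eventually_ge_atTop (1 : ℝ)] with ω hω
  have hω0 : ω ≠ 0 := by linarith
  have h4 : ω ^ 4 ≠ 0 := pow_ne_zero 4 hω0
  simp only [Pi.div_apply]
  have e1 : ka ^ 2 + (kv ^ 2 - 2 * ka * kp) / ω ^ 2 + kp ^ 2 / ω ^ 4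
      = (ka ^ 2 * ω ^ 4 + (kv ^ 2 - 2 * ka * kp) * ω ^ 2 + kp ^ 2) / ω ^ 4 := by
    field_simp
  have e2 : 1 + γ ^ 2 / ω ^ 2 - 2 * γ * Real.sin (τ * ω) / ω + kp ^ 2 / ω ^ 4
        - 2 * kp * Real.cos (τ * ω) / ω ^ 2
      = (ω ^ 4 + γ ^ 2 * ω ^ 2 - 2 * γ * ω ^ 3 * Real.sin (τ * ω) + kp ^ 2
          - 2 * kp * ω ^ 2 * Real.cos (τ * ω)) / ω ^ 4 := by
    field_simp
  rw [e1, e2, div_div_div_cancel_right₀]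
  exact h4
end

section
/- For all ω ≥ 0 and all τ ∈ (0, τ₀], if 1 - k_a² - 2γτ ≥ 0 and γ² - 2k_p + 2k_a k_p - k_v² ≥ 0, then k_a²ω⁴ + (k_v² - 2k_a k_p)ω² + k_p² ≤ ω⁴ - 2γω³ sin(τω) + γ²ω² - 2k_p ω² cos(τω) + k_p², i.e., |H(jω;τ)|² ≤ 1. -/
open Real

/-- sufficient conditions for `|H(jω;τ)|² ≤ 1` for all `ω ≥ 0`, `τ ∈ (0, τ₀]`. -/
theorem stmt_2 (ka kv kp τ₀ hw γ : ℝ)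
    (hka : ka ∈ Set.Ico (0 : ℝ) 1) (hkv : 0 < kv) (hkp : 0 < kp)
    (hτ₀ : 0 < τ₀) (hhw : 0 < hw) (hγ : γ = kv + hw * kp) :
    ∀ ω : ℝ, 0 ≤ ω → ∀ τ : ℝ, τ ∈ Set.Ioc 0 τ₀ →
      1 - ka ^ 2 - 2 * γ * τ ≥ 0 →
      γ ^ 2 - 2 * kp + 2 * ka * kp - kv ^ 2 ≥ 0 →
      ka ^ 2 * ω ^ 4 + (kv ^ 2 - 2 * ka * kp) * ω ^ 2 + kp ^ 2 ≤
        ω ^ 4 - 2 * γ * ω ^ 3 * Real.sin (τ * ω) + γ ^ 2 * ω ^ 2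
          - 2 * kp * ω ^ 2 * Real.cos (τ * ω) + kp ^ 2 := by
  intro ω hω τ hτ h1 h2
  obtain ⟨hτ0, hττ⟩ := hτ
  have hγ0 : 0 < γ := by nlinarith
  have hsin : Real.sin (τ * ω) ≤ τ * ω := Real.sin_le (by positivity)
  have hcos : Real.cos (τ * ω) ≤ 1 := Real.cos_le_one _
  nlinarith [sq_nonneg ω, sq_nonneg (ω^2), mul_nonneg (mul_nonneg hγ0.le (pow_nonneg hω 3)) (sub_nonneg.2 hsin), mul_nonneg (mul_nonneg hkp.le (sq_nonneg ω)) (sub_nonneg.2 hcos), mul_nonneg (sq_nonneg (ω^2)) h1, mul_nonneg (sq_nonneg ω) h2]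
end

section
/- The set S = {(k_v, k_p) : k_v > 0, k_p > 0, k_v + h_w k_p ≤ (1-k_a²)/(2τ₀), and 2k_v h_w + h_w² k_p ≥ 2(1-k_a)} is nonempty if and only if h_w > 2τ₀/(1+k_a). -/
/-- the admissible gain set is nonempty iff `h_w > 2τ₀/(1 + k_a)`. -/
theorem stmt_3 (ka τ₀ hw : ℝ)
    (hka : ka ∈ Set.Ico (0 : ℝ) 1) (hτ₀ : 0 < τ₀) (hhw : 0 < hw) :
    {p : ℝ × ℝ | 0 < p.1 ∧ 0 < p.2 ∧
        p.1 + hw * p.2 ≤ (1 - ka ^ 2) / (2 * τ₀) ∧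
        2 * p.1 * hw + hw ^ 2 * p.2 ≥ 2 * (1 - ka)}.Nonempty
      ↔ hw > 2 * τ₀ / (1 + ka) := by
  obtain ⟨hka0, hka1⟩ := hka
  have h1ka : (0:ℝ) < 1 + ka := by linarith
  have hc : (0:ℝ) < (1 - ka ^ 2) / (2 * τ₀) := by
    apply div_pos (by nlinarith) (by linarith)
  set c : ℝ := (1 - ka ^ 2) / (2 * τ₀) with hcdef
  have hceq : c * (2 * τ₀) = 1 - ka ^ 2 := by
    rw [hcdef, div_mul_cancel₀ _ (by positivity)]
  constructor
  · rintro ⟨⟨kv, kp⟩, hkv, hkp, h1, h2⟩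
    simp only at hkv hkp h1 h2
    rw [gt_iff_lt, div_lt_iff₀ h1ka]
    nlinarith [mul_pos hhw hkp, mul_pos hhw (mul_pos hhw hkp)]
  · intro hgt
    rw [gt_iff_lt, div_lt_iff₀ h1ka] at hgt
    have hε : (0:ℝ) < 2 * hw * c - 2 * (1 - ka) := by
      have : 1 - ka < hw * c := by
        have h := mul_lt_mul_of_pos_right hgt (show (0:ℝ) < 1 - ka by linarith)
        have h2 : hw * (c * (2 * τ₀)) = hw * (1 - ka ^ 2) := by rw [hceq]
        nlinarith [h, h2, hτ₀]
      linarith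
    set kp : ℝ := min (c / (2 * hw)) ((2 * hw * c - 2 * (1 - ka)) / hw ^ 2) with hkpdef
    have hkp0 : 0 < kp := lt_min (div_pos hc (by linarith)) (div_pos hε (by positivity))
    have hkp1 : kp ≤ c / (2 * hw) := min_le_left _ _
    have hkp2 : kp ≤ (2 * hw * c - 2 * (1 - ka)) / hw ^ 2 := min_le_right _ _
    refine ⟨⟨c - hw * kp, kp⟩, ?_, hkp0, ?_, ?_⟩
    · simp only
      have : hw * kp ≤ hw * (c / (2 * hw)) := by
        exact mul_le_mul_of_nonneg_left hkp1 (le_of_lt hhw)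
      have h2 : hw * (c / (2 * hw)) = c / 2 := by field_simp
      nlinarith
    · simp only; linarith
    · simp only
      have : hw ^ 2 * kp ≤ hw ^ 2 * ((2 * hw * c - 2 * (1 - ka)) / hw ^ 2) :=
        mul_le_mul_of_nonneg_left hkp2 (by positivity)
      have h2 : hw ^ 2 * ((2 * hw * c - 2 * (1 - ka)) / hw ^ 2) = 2 * hw * c - 2 * (1 - ka) := by
        field_simp
      nlinarith
end

section
/- Given k_a ∈ [0,1), k_v, k_p > 0, τ₀ > 0, and γ = k_v + h_w k_p satisfying γ ≤ (1-k_a²)/(2τ₀) and γ ≥ sqrt(2k_p(1-k_a) + k_v²), then for any τ ∈ (0, τ₀], k̄_p := τ²k_p satisfies k̄_p < (1-k_a)(1+k_a)²/8. -/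
/-- bound on `k̄_p = τ²k_p`. -/
theorem stmt_6 (ka kv kp τ₀ hw γ : ℝ)
    (hka : ka ∈ Set.Ico (0 : ℝ) 1) (hkv : 0 < kv) (hkp : 0 < kp)
    (hτ₀ : 0 < τ₀) (hhw : 0 < hw) (hγ : γ = kv + hw * kp)
    (h1 : γ ≤ (1 - ka ^ 2) / (2 * τ₀))
    (h2 : γ ≥ Real.sqrt (2 * kp * (1 - ka) + kv ^ 2)) :
    ∀ τ : ℝ, τ ∈ Set.Ioc 0 τ₀ →
      τ ^ 2 * kp < (1 - ka) * (1 + ka) ^ 2 / 8 := by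
  rintro τ ⟨hτ0, hττ₀⟩
  obtain ⟨hka0, hka1⟩ := hka
  have hγpos : 0 < γ := by have := mul_pos hhw hkp; linarith [hγ]
  have hXnn : 0 ≤ 2 * kp * (1 - ka) + kv ^ 2 := by nlinarith
  have hsq : 2 * kp * (1 - ka) + kv ^ 2 ≤ γ ^ 2 := by
    have h := Real.sq_sqrt hXnn
    nlinarith [Real.sqrt_nonneg (2 * kp * (1 - ka) + kv ^ 2)]
  have h1' : 2 * τ₀ * γ ≤ 1 - ka ^ 2 := by
    have := (le_div_iff₀ (by positivity : (0:ℝ) < 2 * τ₀)).mp h1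
    linarith
  have hA : 2 * kp * (1 - ka) < γ ^ 2 := by nlinarith
  have hB : (2 * τ₀ * γ) ^ 2 ≤ (1 - ka ^ 2) ^ 2 := by
    have : 0 ≤ 2 * τ₀ * γ := by positivity
    nlinarith
  have hC : 8 * (τ₀ ^ 2 * kp) * (1 - ka) < (1 - ka) ^ 2 * (1 + ka) ^ 2 := by
    nlinarith [mul_lt_mul_of_pos_left hA (show (0:ℝ) < 4 * τ₀ ^ 2 by positivity)]
  have hD : τ₀ ^ 2 * kp < (1 - ka) * (1 + ka) ^ 2 / 8 := by
    have h1ka : 0 < 1 - ka := by linarith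
    nlinarith
  have hE : τ ^ 2 * kp ≤ τ₀ ^ 2 * kp := by
    nlinarith [mul_le_mul hττ₀ hττ₀ hτ0.le hτ₀.le]
  linarith
end

section
/- For each nonnegative integer m, if 0 < k̄_p < 4/27 then the equation k̄_p/θ² = cos θ has exactly one root in the interval (π/4 + 2mπ, π/2 + 2mπ). -/
open Real

/-- for each nonnegative integer `m`, the equation `k̄_p/θ² = cos θ` has
exactly one root in `(π/4 + 2mπ, π/2 + 2mπ)`. -/
theorem stmt_12 (kp : ℝ) (h0 : 0 < kp) (h1 : kp < 4 / 27) (m : ℕ) :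
    ∃! θ : ℝ, θ ∈ Set.Ioo (π / 4 + 2 * (m : ℝ) * π) (π / 2 + 2 * (m : ℝ) * π) ∧
      kp / θ ^ 2 = Real.cos θ := by
  have hπ := Real.pi_gt_d6
  have hπpos := Real.pi_pos
  set a : ℝ := π / 4 + 2 * (m : ℝ) * π with ha_def
  set b : ℝ := π / 2 + 2 * (m : ℝ) * π with hb_def
  have hm0 : (0:ℝ) ≤ 2 * (m:ℝ) * π := by positivity
  have haq : π / 4 ≤ a := by simp only [ha_def]; linarith
  have hapos : 0 < a := lt_of_lt_of_le (by positivity) haq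
  have hab : a < b := by simp only [ha_def, hb_def]; linarith
  -- sqrt 2 facts
  have hs2 : Real.sqrt 2 ^ 2 = 2 := Real.sq_sqrt (by norm_num)
  have hs2pos : 0 < Real.sqrt 2 := Real.sqrt_pos.mpr (by norm_num)
  have hs2lb : (1.414 : ℝ) < Real.sqrt 2 := by nlinarith
  set g : ℝ → ℝ := fun θ => kp / θ ^ 2 - Real.cos θ with hg_def
  -- endpoint values
  have hga : g a < 0 := by
    have hcos : Real.cos a = Real.sqrt 2 / 2 := by
      have h : a = π / 4 + (m : ℤ) * (2 * π) := by push_cast [ha_def]; ring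
      rw [h, Real.cos_add_int_mul_two_pi, Real.cos_pi_div_four]
    have ha2 : (0:ℝ) < a ^ 2 := by positivity
    have hlt : kp / a ^ 2 < Real.sqrt 2 / 2 := by
      rw [div_lt_iff₀ ha2]
      nlinarith [sq_nonneg (a - 1)]
    simp only [hg_def, hcos]
    linarith
  have hgb : 0 < g b := by
    have hcos : Real.cos b = 0 := by
      have h : b = π / 2 + (m : ℤ) * (2 * π) := by push_cast [hb_def]; ring
      rw [h, Real.cos_add_int_mul_two_pi, Real.cos_pi_div_two]
    have : 0 < kp / b ^ 2 := by positivity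
    simp only [hg_def, hcos]
    linarith
  -- sin lower bound on the open interval
  have hsin : ∀ θ ∈ Set.Ioo a b, Real.sqrt 2 / 2 < Real.sin θ := by
    intro θ hθ
    obtain ⟨hθ1, hθ2⟩ := hθ
    have hx1 : π / 4 < θ - 2 * (m:ℝ) * π := by simp only [ha_def] at hθ1; linarith
    have hx2 : θ - 2 * (m:ℝ) * π < π / 2 := by simp only [hb_def] at hθ2; linarith
    have hshift : Real.sin θ = Real.sin (θ - 2 * (m:ℝ) * π) := by
      have := Real.sin_add_int_mul_two_pi (θ - 2 * (m:ℝ) * π) (m : ℤ)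
      rw [← this]; push_cast; ring_nf
    rw [hshift]
    have := Real.strictMonoOn_sin (by constructor <;> [linarith; linarith] :
        π / 4 ∈ Set.Icc (-(π/2)) (π/2))
      (by constructor <;> [linarith; linarith] :
        θ - 2 * (m:ℝ) * π ∈ Set.Icc (-(π/2)) (π/2)) hx1
    rwa [Real.sin_pi_div_four] at this
  -- derivative
  have hderiv : ∀ θ ∈ Set.Ioo a b, HasDerivAt g (Real.sin θ - 2 * kp / θ ^ 3) θ := by
    intro θ hθ
    have hθpos : 0 < θ := lt_trans hapos hθ.1
    have hθ2 : (θ:ℝ) ^ 2 ≠ 0 := by positivity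
    have h1 : HasDerivAt (fun x : ℝ => kp / x ^ 2)
        ((0 * θ ^ 2 - kp * (2 * θ ^ 1)) / (θ ^ 2) ^ 2) θ :=
      (hasDerivAt_const θ kp).div (hasDerivAt_pow 2 θ) hθ2
    have h2 := h1.sub (Real.hasDerivAt_cos θ)
    refine h2.congr_deriv ?_
    field_simp
    ring
  have hderivpos : ∀ θ ∈ Set.Ioo a b, 0 < Real.sin θ - 2 * kp / θ ^ 3 := by
    intro θ hθ
    have hθa : a < θ := hθ.1
    have hθlb : π / 4 < θ := lt_of_le_of_lt haq hθa
    have hθpos : 0 < θ := by linarith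
    have hθ3 : (π/4) ^ 3 < θ ^ 3 := by
      apply pow_lt_pow_left₀ hθlb (by positivity)
      norm_num
    have hθ3pos : 0 < θ ^ 3 := by positivity
    have hkp : 2 * kp / θ ^ 3 < Real.sqrt 2 / 2 := by
      rw [div_lt_iff₀ hθ3pos]
      have e0 : (0.785 : ℝ) ^ 3 < θ ^ 3 :=
        pow_lt_pow_left₀ (by linarith) (by norm_num) (by norm_num)
      have e1 : (0.4837 : ℝ) < θ ^ 3 := by nlinarith
      nlinarith [mul_lt_mul_of_pos_left e1 hs2pos]
    have := hsin θ hθ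
    linarith
  -- continuity
  have hcont : ContinuousOn g (Set.Icc a b) := by
    apply ContinuousOn.sub
    · apply ContinuousOn.div continuousOn_const (by fun_prop)
      intro x hx
      have : 0 < x := lt_of_lt_of_le hapos hx.1
      positivity
    · exact Real.continuous_cos.continuousOn
  -- strict monotonicity
  have hmono : StrictMonoOn g (Set.Icc a b) := by
    apply strictMonoOn_of_deriv_pos (convex_Icc a b) hcont
    intro x hx
    rw [interior_Icc] at hx
    rw [(hderiv x hx).deriv]
    exact hderivpos x hx
  -- existence via IVT
  have hsub := intermediate_value_Ioo (le_of_lt hab) hcont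
  have h0mem : (0:ℝ) ∈ Set.Ioo (g a) (g b) := ⟨hga, hgb⟩
  obtain ⟨θ, hθmem, hθ0⟩ := hsub h0mem
  have heq : kp / θ ^ 2 = Real.cos θ := by
    have : kp / θ ^ 2 - Real.cos θ = 0 := hθ0
    linarith
  refine ⟨θ, ⟨hθmem, heq⟩, ?_⟩
  rintro y ⟨hymem, hyeq⟩
  have hgy : g y = 0 := by simp only [hg_def]; linarith
  have hgθ : g θ = 0 := hθ0
  exact hmono.injOn (Set.mem_Icc_of_Ioo hymem) (Set.mem_Icc_of_Ioo hθmem)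
    (by rw [hgy, hgθ])
end

section
/- For each nonnegative integer n, if 0 < k̄_p < 4/27 then the equation k̄_p/θ² = cos θ has exactly one root in the interval (3π/2 + 2nπ, 7π/4 + 2nπ). -/
open Real

/-- for each nonnegative integer `n`, the equation `k̄_p/θ² = cos θ` has
exactly one root in `(3π/2 + 2nπ, 7π/4 + 2nπ)`. -/
theorem stmt_13 (kp : ℝ) (h0 : 0 < kp) (h1 : kp < 4 / 27) (n : ℕ) :
    ∃! θ : ℝ, θ ∈ Set.Ioo (3 * π / 2 + 2 * (n : ℝ) * π) (7 * π / 4 + 2 * (n : ℝ) * π) ∧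
      kp / θ ^ 2 = Real.cos θ := by
  have hπ := Real.pi_pos
  set a := 3 * π / 2 + 2 * (n : ℝ) * π with ha
  set b := 7 * π / 4 + 2 * (n : ℝ) * π with hb
  have hnn : (0:ℝ) ≤ 2 * (n:ℝ) * π := by positivity
  have hapos : 0 < a := by rw [ha]; positivity
  have hab : a < b := by rw [ha, hb]; nlinarith
  set g : ℝ → ℝ := fun θ => kp / θ ^ 2 - Real.cos θ with hg
  -- cos on [a,b] via reflection
  have hcos_eq : ∀ x : ℝ, Real.cos x = Real.cos ((n+1) * (2*π) - x) := by
    intro x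
    have h : ((n:ℝ)+1) * (2*π) - x = ((n+1:ℕ):ℝ) * (2*π) - x := by push_cast; ring
    rw [h, Real.cos_nat_mul_two_pi_sub]
  have hmono : ∀ x ∈ Set.Icc a b, ∀ y ∈ Set.Icc a b, x < y →
      Real.cos x < Real.cos y := by
    intro x hx y hy hxy
    rw [hcos_eq x, hcos_eq y]
    apply Real.strictAntiOn_cos
    · constructor
      · have := hy.2; rw [hb] at this; push_cast; nlinarith
      · have := hy.1; rw [ha] at this; push_cast; nlinarith
    · constructor
      · have := hx.2; rw [hb] at this; push_cast; nlinarith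
      · have := hx.1; rw [ha] at this; push_cast; nlinarith
    · linarith
  have hanti : StrictAntiOn g (Set.Icc a b) := by
    intro x hx y hy hxy
    have hx0 : 0 < x := lt_of_lt_of_le hapos hx.1
    have hy0 : 0 < y := lt_of_lt_of_le hapos hy.1
    have hdiv : kp / y ^ 2 < kp / x ^ 2 := by
      apply div_lt_div_of_pos_left h0 (by positivity)
      nlinarith
    have := hmono x hx y hy hxy
    simp only [hg]
    linarith
  have hcont : ContinuousOn g (Set.Icc a b) := by
    apply ContinuousOn.sub
    · apply ContinuousOn.div continuousOn_const (continuousOn_pow 2)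
      intro x hx
      have hx0 : 0 < x := lt_of_lt_of_le hapos hx.1
      positivity
    · exact Real.continuousOn_cos
  -- endpoint values
  have hcosa : Real.cos a = 0 := by
    rw [ha]
    have : 3 * π / 2 + 2 * (n:ℝ) * π = 2 * π - π/2 + (n:ℕ) * (2*π) := by push_cast; ring
    rw [this, Real.cos_add_nat_mul_two_pi, Real.cos_two_pi_sub, Real.cos_pi_div_two]
  have hcosb : Real.cos b = Real.sqrt 2 / 2 := by
    rw [hb]
    have : 7 * π / 4 + 2 * (n:ℝ) * π = 2 * π - π/4 + (n:ℕ) * (2*π) := by push_cast; ring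
    rw [this, Real.cos_add_nat_mul_two_pi, Real.cos_two_pi_sub, Real.cos_pi_div_four]
  have hga : 0 < g a := by
    simp only [hg, hcosa]
    have : 0 < kp / a ^ 2 := by positivity
    linarith
  have hgb : g b < 0 := by
    simp only [hg, hcosb]
    have hb1 : (1:ℝ) < b := by rw [hb]; nlinarith [Real.pi_gt_three]
    have h2 : kp / b ^ 2 < kp := by
      rw [div_lt_iff₀ (by nlinarith)]
      nlinarith [mul_pos h0 (show (0:ℝ) < b ^ 2 - 1 by nlinarith)]
    have hs : (1:ℝ) < Real.sqrt 2 := by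
      have : Real.sqrt 1 < Real.sqrt 2 := Real.sqrt_lt_sqrt (by norm_num) (by norm_num)
      simpa using this
    linarith
  have himage : (0:ℝ) ∈ g '' Set.Ioo a b := by
    apply intermediate_value_Ioo' (le_of_lt hab) hcont
    exact ⟨hgb, hga⟩
  obtain ⟨θ, hθmem, hθ⟩ := himage
  refine ⟨θ, ⟨hθmem, by simp only [hg] at hθ; linarith⟩, ?_⟩
  rintro y ⟨hymem, hy⟩
  have hgy : g y = 0 := by simp only [hg]; linarith
  have hgθ : g θ = 0 := hθ
  exact hanti.injOn (Set.Ioo_subset_Icc_self hymem) (Set.Ioo_subset_Icc_self hθmem)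
    (by rw [hgy, hgθ])
end
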